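/- arXiv:2512.14385 — 4 statements merged into one kernel-verified Lean document; each statement's English description precedes it below -/
import Mathlib

section
/- In the root system Φ of type B₂ with simple roots α₁ (long, squared length 4) and α₂ (short, squared length 2), the set Ψ = {±α₁, ±(α₁ + 2α₂)} is a root subsystem of Φ of type A₁ × A₁, and its dual Ψ∨ is not closed in Φ∨: the element α₁∨ + (α₁+2α₂)∨ = α₁ + α₂ lies in Φ∨ but is not of the form γ∨ for any γ ∈ Ψ. -/
noncomputable section

/-- Standard inner product on `ℝ²`. -/
def ip2 (x y : Fin 2 → ℝ) : ℝ := x 0 * y 0 + x 1 * y 1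

/-- The reflection in the root `β`. -/
def refl2 (β x : Fin 2 → ℝ) : Fin 2 → ℝ := x - (2 * ip2 x β / ip2 β β) • β

/-- The coroot `α∨ = 2α/(α,α)`. -/
def cov2 (α : Fin 2 → ℝ) : Fin 2 → ℝ := (2 / ip2 α α) • α

/-- The long simple root `α₁` of `B₂`, with `(α₁,α₁) = 4`. -/
def alpha1 : Fin 2 → ℝ := ![0, 2]

/-- The short simple root `α₂` of `B₂`, with `(α₂,α₂) = 2`. -/
def alpha2 : Fin 2 → ℝ := ![1, -1]

/-- The root system of type `B₂`: `±α₁, ±α₂, ±(α₁+α₂), ±(α₁+2α₂)`. -/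
def PhiB2 : Set (Fin 2 → ℝ) :=
  {alpha1, -alpha1, alpha2, -alpha2, alpha1 + alpha2, -(alpha1 + alpha2),
    alpha1 + (2 : ℝ) • alpha2, -(alpha1 + (2 : ℝ) • alpha2)}

/-- The subsystem `Ψ = {±α₁, ±(α₁ + 2α₂)}`. -/
def PsiB2 : Set (Fin 2 → ℝ) :=
  {alpha1, -alpha1, alpha1 + (2 : ℝ) • alpha2, -(alpha1 + (2 : ℝ) • alpha2)}

/-- In type `B₂`, the set `Ψ = {±α₁, ±(α₁+2α₂)}` is a root subsystem of type `A₁ × A₁`,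
but its dual is not closed in `Φ∨`: `α₁∨ + (α₁+2α₂)∨ = α₁ + α₂` lies in `Φ∨` yet is not
of the form `γ∨` for `γ ∈ Ψ`. -/
theorem stmt_3 :
    PsiB2 ⊆ PhiB2 ∧
    (∀ α ∈ PsiB2, -α ∈ PsiB2) ∧
    (∀ α ∈ PsiB2, ∀ β ∈ PsiB2, refl2 β α ∈ PsiB2) ∧
    (∀ α ∈ PsiB2, ∀ β ∈ PsiB2, ip2 α β = 0 ∨ α = β ∨ α = -β) ∧
    cov2 alpha1 + cov2 (alpha1 + (2 : ℝ) • alpha2) = alpha1 + alpha2 ∧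
    (alpha1 + alpha2) ∈ cov2 '' PhiB2 ∧
    ¬ ∃ γ ∈ PsiB2, cov2 γ = alpha1 + alpha2 := by
  refine ⟨?_, ?_, ?_, ?_, ?_, ⟨alpha1 + alpha2, ?_, ?_⟩, ?_⟩
  · intro x hx
    simp only [PsiB2, PhiB2, Set.mem_insert_iff, Set.mem_singleton_iff] at hx ⊢
    tauto
  · intro α hα
    simp only [PsiB2, Set.mem_insert_iff, Set.mem_singleton_iff] at hα ⊢
    rcases hα with h|h|h|h <;> subst h <;> simp [neg_neg]
  · intro α hα β hβ
    simp only [PsiB2, Set.mem_insert_iff, Set.mem_singleton_iff] at hα hβ ⊢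
    rcases hα with h|h|h|h <;> rcases hβ with h'|h'|h'|h' <;> subst h h' <;>
      norm_num [refl2, ip2, alpha1, alpha2, funext_iff, Fin.forall_fin_two]
  · intro α hα β hβ
    simp only [PsiB2, Set.mem_insert_iff, Set.mem_singleton_iff] at hα hβ
    rcases hα with h|h|h|h <;> rcases hβ with h'|h'|h'|h' <;> subst h h' <;>
      norm_num [ip2, alpha1, alpha2, funext_iff, Fin.forall_fin_two]
  · norm_num [cov2, ip2, alpha1, alpha2, funext_iff, Fin.forall_fin_two]
  · simp [PhiB2]
  · norm_num [cov2, ip2, alpha1, alpha2, funext_iff, Fin.forall_fin_two]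
  · rintro ⟨γ, hγ, hc⟩
    simp only [PsiB2, Set.mem_insert_iff, Set.mem_singleton_iff] at hγ
    rcases hγ with h|h|h|h <;> subst h <;>
      norm_num [cov2, ip2, alpha1, alpha2, funext_iff, Fin.forall_fin_two] at hc

end
end

section
/- In the root system Φ of type B₃, let Ψ be the set of all short roots (a subsystem of type A₁×A₁×A₁, namely {±e₁, ±e₂, ±e₃} in the standard realization). Then there is no vector λ in the ambient space ℝ³ such that Ψ = {α ∈ Φ : ⟨λ, α∨⟩ ∈ ℤ}. -/
/-- Standard inner product on `ℝ³`. -/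
def ip3 (x y : Fin 3 → ℝ) : ℝ := x 0 * y 0 + x 1 * y 1 + x 2 * y 2

/-- Standard basis vector `eᵢ`. -/
def e3 (i : Fin 3) : Fin 3 → ℝ := Pi.single i 1

/-- The root system of type `B₃` in `ℝ³`: short roots `±eᵢ` and long roots `±eᵢ ± e_j`. -/
def PhiB3 : Set (Fin 3 → ℝ) :=
  {x | (∃ i, x = e3 i ∨ x = -e3 i) ∨
    (∃ i j, i ≠ j ∧ (x = e3 i + e3 j ∨ x = -(e3 i + e3 j) ∨ x = e3 i - e3 j))}

/-- The set of short roots of `B₃`, a subsystem of type `A₁ × A₁ × A₁`. -/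
def PsiB3 : Set (Fin 3 → ℝ) := {x | ∃ i, x = e3 i ∨ x = -e3 i}

lemma psi_norm {x : Fin 3 → ℝ} (hx : x ∈ PsiB3) : ip3 x x = 1 := by
  obtain ⟨k, hk | hk⟩ := hx <;> subst hk <;> fin_cases k <;>
    simp [ip3, e3, Pi.single, Function.update]

lemma long_norm (i j : Fin 3) (hij : i ≠ j) :
    ip3 (e3 i + e3 j) (e3 i + e3 j) = 2 := by
  fin_cases i <;> fin_cases j <;> simp_all [ip3, e3, Pi.single, Function.update] <;> norm_num

lemma long_ip (l : Fin 3 → ℝ) (i j : Fin 3) (hij : i ≠ j) :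
    ip3 l (e3 i + e3 j) = l i + l j := by
  fin_cases i <;> fin_cases j <;> simp_all [ip3, e3, Pi.single, Function.update] <;> ring

lemma short_ip (l : Fin 3 → ℝ) (i : Fin 3) : ip3 l (e3 i) = l i := by
  fin_cases i <;> simp [ip3, e3, Pi.single, Function.update]

/-- In type `B₃`, the set of all short roots is not of the form
`{α ∈ Φ : ⟨λ, α∨⟩ ∈ ℤ}` for any vector `λ ∈ ℝ³`. -/
theorem stmt_4 :
    ¬ ∃ l : Fin 3 → ℝ,
      PsiB3 = {α ∈ PhiB3 | ∃ z : ℤ, 2 * ip3 l α / ip3 α α = (z : ℝ)} := by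
  rintro ⟨l, h⟩
  -- each short root gives 2 * l i ∈ ℤ
  have hshort : ∀ i : Fin 3, ∃ z : ℤ, 2 * l i = (z : ℝ) := by
    intro i
    have hi : e3 i ∈ PsiB3 := ⟨i, Or.inl rfl⟩
    rw [h] at hi
    obtain ⟨-, z, hz⟩ := hi
    refine ⟨z, ?_⟩
    have h1 : ip3 (e3 i) (e3 i) = 1 := psi_norm ⟨i, Or.inl rfl⟩
    rw [h1, short_ip] at hz
    simpa using hz
  choose z hz using hshort
  -- if l i + l j ∈ ℤ for some i ≠ j, contradiction
  have key : ∀ i j : Fin 3, i ≠ j → ¬ ∃ w : ℤ, l i + l j = (w : ℝ) := by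
    rintro i j hij ⟨w, hw⟩
    have hmem : e3 i + e3 j ∈ PsiB3 := by
      rw [h]
      refine ⟨Or.inr ⟨i, j, hij, Or.inl rfl⟩, w, ?_⟩
      rw [long_norm i j hij, long_ip l i j hij, hw]
      ring
    have := psi_norm hmem
    rw [long_norm i j hij] at this
    norm_num at this
  -- pigeonhole on parity of z 0, z 1, z 2
  have pair : ∃ i j : Fin 3, i ≠ j ∧ Even (z i + z j) := by
    rcases Int.even_or_odd (z 0) with h0 | h0 <;>
    rcases Int.even_or_odd (z 1) with h1 | h1 <;>
    rcases Int.even_or_odd (z 2) with h2 | h2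
    · exact ⟨0, 1, by decide, h0.add h1⟩
    · exact ⟨0, 1, by decide, h0.add h1⟩
    · exact ⟨0, 2, by decide, h0.add h2⟩
    · exact ⟨1, 2, by decide, h1.add_odd h2⟩
    · exact ⟨1, 2, by decide, h1.add h2⟩
    · exact ⟨0, 2, by decide, h0.add_odd h2⟩
    · exact ⟨0, 1, by decide, h0.add_odd h1⟩
    · exact ⟨0, 1, by decide, h0.add_odd h1⟩
  obtain ⟨i, j, hij, w, hw⟩ := pair
  apply key i j hij
  refine ⟨w, ?_⟩
  have h2 : 2 * (l i + l j) = ((z i + z j : ℤ) : ℝ) := by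
    push_cast [← hz i, ← hz j]; ring
  rw [hw] at h2
  push_cast at h2
  linarith
end

section
/- Let Λ : Q → k^× be a group homomorphism from the root lattice Q of a root system Φ to the multiplicative group of a field k containing an element q that is not a root of unity, and suppose that for some positive root α and positive integer m one has q^{2(ρ,α) − m(α,α)} · Λ(2α) = 1. Then the homomorphism Λ' : Q → k^× defined by Λ'(μ) = q^{(s_αρ − ρ, μ)} · Λ(s_α μ) · σ(μ), where σ(μ) = (−1)^{⟨μ,α∨⟩} if Λ(α) ∈ −q^{(1/2)ℤ(α,α)} and σ(μ) = 1 otherwise, satisfies Λ'(μ) = q^{−m(α,μ)} Λ(μ) for all μ ∈ Q. -/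
/-!
Write `(α,α) = 2e` and `(ρ,α) = es`. The hypothesis says `Λ(α)² = q^{2E}` with
`E = e(m − s)`, so `Λ(α) = ε q^E` for a sign `ε = ±1`. Since `q` is not a root of unity,
`Λ(α) ∈ −q^{eℤ}` forces `Λ(α) = −q^E`; hence in both cases `σ(μ) = ε^{⟨μ,α∨⟩}`. As
`s_α μ = μ − ⟨μ,α∨⟩ α`, the sign cancels in `Λ'(μ)`, leaving the exponent
`−⟨μ,α∨⟩((ρ,α) + E) = −⟨μ,α∨⟩ e m = −m(α,μ)`.
-/

lemma Units.eq_or_eq_neg_of_mul_self_eq_mul_self {R : Type*} [CommRing R] [NoZeroDivisors R]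
    {a b : Rˣ} (h : a * a = b * b) : a = b ∨ a = -b := by
  rcases mul_self_eq_mul_self_iff.mp (congrArg Units.val h) with h | h
  · exact Or.inl (Units.ext h)
  · exact Or.inr (Units.ext h)

lemma eq_of_neg_zpow_mul_self_eq {G : Type*} [Group G] [HasDistribNeg G] {q : G}
    (hq : ¬IsOfFinOrder q) {n E : ℤ} (h : -q ^ n * -q ^ n = q ^ E * q ^ E) : n = E := by
  rw [neg_mul_neg, ← zpow_add, ← zpow_add] at h
  have := injective_zpow_iff_not_isOfFinOrder.mpr hq h
  omega

lemma map_zsmul_of_map_add {G M : Type*} [AddGroup G] [Group M] (f : G → M)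
    (hf : ∀ x y, f (x + y) = f x * f y) (n : ℤ) (x : G) : f (n • x) = f x ^ n :=
  (MonoidHom.mk' (fun y : Multiplicative G => f y.toAdd) hf).map_zpow (.ofAdd x) n

lemma zpow_mul_map_sub_zsmul_mul_zpow {G M : Type*} [AddCommGroup G] [CommGroup M]
    (q ε : M) (Λ : G → M) (hΛ : ∀ x y, Λ (x + y) = Λ x * Λ y) (r : G →+ ℤ)
    {α : G} {E : ℤ} (hΛα : Λ α = ε * q ^ E) (n : ℤ) (μ : G) :
    q ^ (r (μ - n • α) - r μ) * Λ (μ - n • α) * ε ^ n = q ^ (-n * (r α + E)) * Λ μ := by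
  rw [map_sub, map_zsmul, smul_eq_mul, sub_sub_cancel_left, sub_eq_add_neg μ, ← neg_smul, hΛ,
    map_zsmul_of_map_add Λ hΛ, hΛα, mul_zpow, ← zpow_mul,
    show -n * (r α + E) = -(n * r α) + E * -n by ring, zpow_add, zpow_neg ε]
  simp only [mul_comm, mul_left_comm, mul_assoc, mul_inv_cancel_left]

theorem stmt_16_general {k : Type*} [Field k] (q : kˣ)
    (hq : ∀ n : ℕ, 0 < n → q ^ n ≠ 1)
    {Q : Type*} [AddCommGroup Q]
    (B : Q → Q → ℤ)
    (hBsymm : ∀ x y, B x y = B y x)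
    (r : Q →+ ℤ)
    (α : Q) (e : ℤ) (he : B α α = 2 * e)
    (s : ℤ) (hs : r α = e * s)
    (p : Q →+ ℤ) (hp : ∀ μ : Q, B α α * p μ = 2 * B μ α)
    (m : ℕ)
    (Λ : Q → kˣ) (hΛ : ∀ x y : Q, Λ (x + y) = Λ x * Λ y)
    (hkey : q ^ (2 * r α - (m : ℤ) * B α α) * Λ (α + α) = 1)
    (σ : Q → kˣ)
    (hσ1 : (∃ t : ℤ, Λ α = -q ^ (t * e)) → ∀ μ : Q, σ μ = (-1 : kˣ) ^ p μ)
    (hσ2 : (¬ ∃ t : ℤ, Λ α = -q ^ (t * e)) → ∀ μ : Q, σ μ = 1) :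
    ∀ μ : Q, q ^ (r (μ - p μ • α) - r μ) * Λ (μ - p μ • α) * σ μ
      = q ^ (-(m : ℤ) * B α μ) * Λ μ := by
  have hq' : ¬IsOfFinOrder q := fun h ↦
    let ⟨n, hn, hqn⟩ := isOfFinOrder_iff_pow_eq_one.mp h; hq n hn hqn
  set E := e * ((m : ℤ) - s) with hE
  have hsq : Λ α * Λ α = q ^ E * q ^ E := by
    rw [hΛ, hs, he, mul_comm, ← eq_inv_iff_mul_eq_one] at hkey
    rw [hkey, ← zpow_neg, ← zpow_add, hE]
    ring_nf
  obtain ⟨ε, hΛα, hσ⟩ : ∃ ε : kˣ, Λ α = ε * q ^ E ∧ ∀ μ, σ μ = ε ^ p μ := by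
    by_cases hneg : ∃ t : ℤ, Λ α = -q ^ (t * e)
    · obtain ⟨t, ht⟩ := hneg
      refine ⟨-1, ?_, hσ1 ⟨t, ht⟩⟩
      have hte : t * e = E := eq_of_neg_zpow_mul_self_eq hq' (by rwa [ht] at hsq)
      rw [ht, hte, neg_one_mul]
    · refine ⟨1, ?_, by simpa using hσ2 hneg⟩
      rcases Units.eq_or_eq_neg_of_mul_self_eq_mul_self hsq with h | h
      · rw [h, one_mul]
      · exact (hneg ⟨m - s, by rw [h, mul_comm]⟩).elim
  intro μ
  have hBα : B α μ = e * p μ := by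
    have := hp μ
    rw [he, hBsymm μ α] at this
    linarith
  rw [hσ, zpow_mul_map_sub_zsmul_mul_zpow q ε Λ hΛ r hΛα, hs, hBα, hE]
  ring_nf

/-- Let `Λ : Q → k^×` be a group homomorphism from the root lattice `Q` (with integral
`W`-invariant pairing `B`, `r μ = (ρ, μ)`, and `p μ = ⟨μ, α∨⟩`) to the multiplicative
group of a field `k` containing an element `q` that is not a root of unity. Suppose that
`q^{2(ρ,α) − m(α,α)} Λ(2α) = 1` for a positive root `α` and `m ∈ ℕ₊`. Then the modified
homomorphism `Λ'(μ) = q^{(s_αρ − ρ, μ)} Λ(s_α μ) σ(μ)` (where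
`(s_αρ − ρ, μ) = r(s_α μ) − r(μ)`, and `σ(μ) = (−1)^{⟨μ,α∨⟩}` if
`Λ(α) ∈ −q^{(1/2)ℤ(α,α)}` and `σ(μ) = 1` otherwise) satisfies
`Λ'(μ) = q^{−m(α,μ)} Λ(μ)` for all `μ ∈ Q`. -/
theorem stmt_16 {k : Type*} [Field k] (q : kˣ)
    (hq : ∀ n : ℕ, 0 < n → q ^ n ≠ 1)
    {Q : Type*} [AddCommGroup Q]
    (B : Q → Q → ℤ)
    (hBsymm : ∀ x y, B x y = B y x)
    (hBadd : ∀ x y z, B (x + y) z = B x z + B y z)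
    (r : Q →+ ℤ)
    (α : Q) (e : ℤ) (he : B α α = 2 * e) (hα : B α α ≠ 0)
    (s : ℤ) (hs : r α = e * s)
    (p : Q →+ ℤ) (hp : ∀ μ : Q, B α α * p μ = 2 * B μ α)
    (m : ℕ) (hm : 0 < m)
    (Λ : Q → kˣ) (hΛ : ∀ x y : Q, Λ (x + y) = Λ x * Λ y)
    (hkey : q ^ (2 * r α - (m : ℤ) * B α α) * Λ (α + α) = 1)
    (σ : Q → kˣ)
    (hσ1 : (∃ t : ℤ, Λ α = -q ^ (t * e)) → ∀ μ : Q, σ μ = (-1 : kˣ) ^ p μ)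
    (hσ2 : (¬ ∃ t : ℤ, Λ α = -q ^ (t * e)) → ∀ μ : Q, σ μ = 1) :
    ∀ μ : Q, q ^ (r (μ - p μ • α) - r μ) * Λ (μ - p μ • α) * σ μ
      = q ^ (-(m : ℤ) * B α μ) * Λ μ :=
  stmt_16_general q hq B hBsymm r α e he s hs p hp m Λ hΛ hkey σ hσ1 hσ2
end

section
/- Let Φ be an irreducible root system of type Bₙ (n ≥ 2) realized in ℝⁿ with short roots ±eᵢ of squared length 2 and long roots ±eᵢ±e_j of squared length 4, and let Ψ = {±(eᵢ ± e_j) : i ≠ j} be the long-root subsystem of type Dₙ. Let F = ℚ(q^{1/2}) with q transcendental. Then there is no group homomorphism Λ : Q → F^× from the root lattice to the multiplicative group of F such that Ψ = {α ∈ Φ : Λ(2α) ∈ q^{ℤ·(α,α)}}. -/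
/-- The inner product on the `Bₙ` root lattice, normalized so that short roots `eᵢ` have
squared length `2` and long roots `eᵢ ± e_j` have squared length `4`. -/
def ipB (n : ℕ) (x y : Fin n → ℤ) : ℤ := 2 * ∑ i, x i * y i

/-- The lattice vector `eᵢ`. -/
def eB (n : ℕ) (i : Fin n) : Fin n → ℤ := Pi.single i 1

/-- The root system of type `Bₙ`: short roots `±eᵢ` and long roots `±eᵢ ± e_j`. -/
def PhiB (n : ℕ) : Set (Fin n → ℤ) :=
  {x | (∃ i, x = eB n i ∨ x = -eB n i) ∨
    (∃ i j, i ≠ j ∧ (x = eB n i + eB n j ∨ x = -(eB n i + eB n j) ∨ x = eB n i - eB n j))}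

/-- The long-root subsystem of type `Dₙ`: the roots `±(eᵢ ± e_j)`. -/
def PsiD (n : ℕ) : Set (Fin n → ℤ) :=
  {x | ∃ i j, i ≠ j ∧ (x = eB n i + eB n j ∨ x = -(eB n i + eB n j) ∨ x = eB n i - eB n j)}

lemma neg_one_not_square (z : RatFunc ℚ) : z^2 ≠ -1 := by
  intro h
  set P := z.num with hP
  set D := z.denom with hD
  have hdz : D ≠ 0 := z.denom_ne_zero
  have hzz : algebraMap (Polynomial ℚ) (RatFunc ℚ) P / algebraMap _ _ D = z :=
    RatFunc.num_div_denom z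
  have hDz : algebraMap (Polynomial ℚ) (RatFunc ℚ) D ≠ 0 := by
    simpa using hdz
  have key : algebraMap (Polynomial ℚ) (RatFunc ℚ) (P^2 + D^2) = 0 := by
    have : (algebraMap (Polynomial ℚ) (RatFunc ℚ) P)^2
        = - (algebraMap (Polynomial ℚ) (RatFunc ℚ) D)^2 := by
      rw [← hzz] at h
      field_simp at h
      linear_combination h
    push_cast [map_add, map_pow]
    rw [this]; ring
  have key2 : P^2 + D^2 = 0 := by
    have hinj := RatFunc.algebraMap_injective ℚ
    have := hinj (by simpa using key : algebraMap (Polynomial ℚ) (RatFunc ℚ) (P^2+D^2) = algebraMap _ _ 0)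
    simpa using this
  have hPz : P ≠ 0 := by
    intro h0
    rw [h0] at key2
    simp [pow_eq_zero_iff] at key2
    exact hdz key2
  have h3 : P^2 = -(D^2) := by linear_combination key2
  have hl : (P.leadingCoeff)^2 = -(D.leadingCoeff)^2 := by
    have : (P^2).leadingCoeff = (-(D^2)).leadingCoeff := by rw [h3]
    simpa [Polynomial.leadingCoeff_pow] using this
  have h4 : 0 < P.leadingCoeff^2 := by
    have := Polynomial.leadingCoeff_ne_zero.mpr hPz
    positivity
  linarith [sq_nonneg D.leadingCoeff]

lemma sum_eB_mul {n : ℕ} (i j : Fin n) :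
    ∑ k, eB n i k * eB n j k = if i = j then 1 else 0 := by
  simp [eB, Pi.single_apply, eq_comm]

lemma sum_eB {n : ℕ} (i : Fin n) : ∑ k, eB n i k = 1 := by
  simp [eB, Finset.sum_pi_single']

lemma ipB_eB {n : ℕ} (i : Fin n) : ipB n (eB n i) (eB n i) = 2 := by
  simp [ipB, sum_eB_mul]

lemma ipB_add {n : ℕ} {i j : Fin n} (hij : i ≠ j) :
    ipB n (eB n i + eB n j) (eB n i + eB n j) = 4 := by
  simp [ipB, add_mul, mul_add, Finset.sum_add_distrib, sum_eB_mul, hij, hij.symm]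

lemma ipB_sub {n : ℕ} {i j : Fin n} (hij : i ≠ j) :
    ipB n (eB n i - eB n j) (eB n i - eB n j) = 4 := by
  simp [ipB, sub_mul, mul_sub, Finset.sum_sub_distrib, sum_eB_mul, hij, hij.symm]

lemma eB_not_psi {n : ℕ} (i : Fin n) : eB n i ∉ PsiD n := by
  rintro ⟨a, b, hab, h | h | h⟩ <;>
  · have := congrArg (fun x => ∑ k, x k) h
    simp [Finset.sum_add_distrib, Finset.sum_sub_distrib, sum_eB] at this

/-- Over the field `F = ℚ(q^{1/2})` (modelled as `ℚ(X)` with `q = X²`), there is no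
group homomorphism `Λ` from the `Bₙ` root lattice to `F^×` such that the long-root
subsystem `Ψ` of type `Dₙ` equals `{α ∈ Φ : Λ(2α) ∈ q^{ℤ·(α,α)}}`. -/
theorem stmt_18 (n : ℕ) (hn : 2 ≤ n) :
    ¬ ∃ Λ : (Fin n → ℤ) → RatFunc ℚ,
      (∀ x, Λ x ≠ 0) ∧
      (∀ x y, Λ (x + y) = Λ x * Λ y) ∧
      (∀ α ∈ PhiB n, (α ∈ PsiD n ↔
        ∃ m : ℤ, Λ (2 • α) = ((RatFunc.X : RatFunc ℚ) ^ 2) ^ (m * ipB n α α))) := by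
  rintro ⟨Λ, hne, hadd, hiff⟩
  set t : RatFunc ℚ := (RatFunc.X : RatFunc ℚ) ^ 2 with ht
  have htz : t ≠ 0 := pow_ne_zero _ RatFunc.X_ne_zero
  have i0 : Fin n := ⟨0, by omega⟩
  set j0 : Fin n := ⟨0, by omega⟩ with hj0
  set j1 : Fin n := ⟨1, by omega⟩ with hj1
  have h01 : j0 ≠ j1 := by simp [hj0, hj1, Fin.ext_iff]
  set a : Fin n → ℤ := eB n j0 with ha
  set b : Fin n → ℤ := eB n j1 with hb
  have hα₁Φ : a + b ∈ PhiB n := Or.inr ⟨j0, j1, h01, Or.inl rfl⟩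
  have hα₁Ψ : a + b ∈ PsiD n := ⟨j0, j1, h01, Or.inl rfl⟩
  have hα₂Φ : a - b ∈ PhiB n := Or.inr ⟨j0, j1, h01, Or.inr (Or.inr rfl)⟩
  have hα₂Ψ : a - b ∈ PsiD n := ⟨j0, j1, h01, Or.inr (Or.inr rfl)⟩
  have hbΦ : b ∈ PhiB n := Or.inl ⟨j1, Or.inl rfl⟩
  obtain ⟨m₁, hm₁⟩ := (hiff _ hα₁Φ).mp hα₁Ψ
  obtain ⟨m₂, hm₂⟩ := (hiff _ hα₂Φ).mp hα₂Ψ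
  rw [ipB_add h01] at hm₁
  rw [ipB_sub h01] at hm₂
  set c := Λ (2 • b) with hc
  have hkey : Λ (2 • (a + b)) = Λ (2 • (a - b)) * (c * c) := by
    have hv : (2 • (a + b) : Fin n → ℤ) = (2 • (a - b) + 2 • b) + 2 • b := by
      ext k; simp only [Pi.add_apply, Pi.sub_apply, Pi.smul_apply, smul_eq_mul]; ring
    rw [hv, hadd, hadd]; ring
  have hc2 : c * c = t ^ ((m₁ - m₂) * 4) := by
    have hA : Λ (2 • (a - b)) ≠ 0 := hne _
    have h1 : t ^ (m₁ * 4) = t ^ (m₂ * 4) * (c * c) := by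
      rw [← hm₁, ← hm₂]; exact hkey
    have h2 : c * c = t ^ (m₁ * 4) * (t ^ (m₂ * 4))⁻¹ := by
      rw [hm₂] at hA
      rw [h1]
      field_simp
    rw [h2, ← zpow_neg, ← zpow_add₀ htz]
    congr 1; ring
  have hyy : t ^ ((m₁ - m₂) * 4) = t ^ ((m₁ - m₂) * 2) * t ^ ((m₁ - m₂) * 2) := by
    rw [← zpow_add₀ htz]; congr 1; ring
  have hfac : (c - t ^ ((m₁ - m₂) * 2)) * (c + t ^ ((m₁ - m₂) * 2)) = 0 := by
    have : (c - t ^ ((m₁ - m₂) * 2)) * (c + t ^ ((m₁ - m₂) * 2))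
        = c * c - t ^ ((m₁ - m₂) * 2) * t ^ ((m₁ - m₂) * 2) := by ring
    rw [this, hc2, hyy, sub_self]
  have hb2 : Λ b * Λ b = c := by
    rw [hc, two_smul, hadd]
  rcases mul_eq_zero.mp hfac with h | h
  · have hceq : c = t ^ ((m₁ - m₂) * 2) := sub_eq_zero.mp h
    have : b ∈ PsiD n := (hiff b hbΦ).mpr ⟨m₁ - m₂, by
      rw [ipB_eB, ← hc, hceq]⟩
    exact eB_not_psi j1 this
  · have hceq : c = - t ^ ((m₁ - m₂) * 2) := eq_neg_of_add_eq_zero_left h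
    apply neg_one_not_square (Λ b * t ^ (-(m₁ - m₂)))
    have h1 : t ^ (-(m₁ - m₂)) * t ^ (-(m₁ - m₂)) = t ^ (-(m₁ - m₂) + -(m₁ - m₂)) :=
      (zpow_add₀ htz _ _).symm
    calc (Λ b * t ^ (-(m₁ - m₂))) ^ 2
        = (Λ b * Λ b) * (t ^ (-(m₁ - m₂)) * t ^ (-(m₁ - m₂))) := by ring
      _ = c * t ^ (-(m₁ - m₂) + -(m₁ - m₂)) := by rw [hb2, h1]
      _ = - (t ^ ((m₁ - m₂) * 2) * t ^ (-(m₁ - m₂) + -(m₁ - m₂))) := by rw [hceq]; ring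
      _ = - t ^ ((m₁ - m₂) * 2 + (-(m₁ - m₂) + -(m₁ - m₂))) := by rw [← zpow_add₀ htz]
      _ = -1 := by
          rw [show (m₁ - m₂) * 2 + (-(m₁ - m₂) + -(m₁ - m₂)) = 0 by ring, zpow_zero]
end
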